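/- Let Γ be a group with elements σ₁,…,σ₆ such that σᵢ and σⱼ commute whenever the indices i, j (taken mod 6) are not adjacent (i.e., |i − j| mod 6 ∉ {1, 5}). Let G be the subgroup of Γ generated by the elements σ₁σ₄, σ₂σ₅, σ₃σ₆, σ₁σ₃σ₅, σ₂σ₄σ₆, and σ₁σ₂σ₃σ₄σ₅. Then σ₃ ∈ G. -/
import Mathlib

private lemma sw {Γ : Type*} [Group Γ] {a b : Γ} (h : Commute a b) (c : Γ) :
    a * (b * c) = b * (a * c) := by rw [← mul_assoc, h.eq, mul_assoc]

/-- Abstract version of the key computation in Section 5: if `σ₁,…,σ₆` (indexed by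
`ZMod 6`, `σ₆ = σ 6 = σ 0`) pairwise commute whenever their indices are not adjacent
mod 6, then `σ₃` lies in the subgroup generated by
`σ₁σ₄, σ₂σ₅, σ₃σ₆, σ₁σ₃σ₅, σ₂σ₄σ₆, σ₁σ₂σ₃σ₄σ₅`. -/
theorem sigma_three_mem
    {Γ : Type*} [Group Γ] (σ : ZMod 6 → Γ)
    (hcomm : ∀ i j : ZMod 6, i - j ≠ 1 → i - j ≠ -1 → Commute (σ i) (σ j)) :
    σ 3 ∈ Subgroup.closure
      ({σ 1 * σ 4, σ 2 * σ 5, σ 3 * σ 6, σ 1 * σ 3 * σ 5, σ 2 * σ 4 * σ 6,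
        σ 1 * σ 2 * σ 3 * σ 4 * σ 5} : Set Γ) := by
  have h24 : Commute (σ 2) (σ 4) := hcomm 2 4 (by decide) (by decide)
  have h14 : Commute (σ 1) (σ 4) := hcomm 1 4 (by decide) (by decide)
  have h13 : Commute (σ 1) (σ 3) := hcomm 1 3 (by decide) (by decide)
  have h36 : Commute (σ 3) (σ 6) := hcomm 3 6 (by decide) (by decide)
  have h46 : Commute (σ 4) (σ 6) := hcomm 4 6 (by decide) (by decide)
  set H := Subgroup.closure
      ({σ 1 * σ 4, σ 2 * σ 5, σ 3 * σ 6, σ 1 * σ 3 * σ 5, σ 2 * σ 4 * σ 6,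
        σ 1 * σ 2 * σ 3 * σ 4 * σ 5} : Set Γ) with hH
  have ha : σ 1 * σ 4 ∈ H := Subgroup.subset_closure (by simp)
  have hb : σ 2 * σ 5 ∈ H := Subgroup.subset_closure (by simp)
  have he : σ 2 * σ 4 * σ 6 ∈ H := Subgroup.subset_closure (by simp)
  have hf : σ 1 * σ 2 * σ 3 * σ 4 * σ 5 ∈ H := Subgroup.subset_closure (by simp)
  have key : σ 3 = (σ 1 * σ 4) * ((σ 1 * σ 4) * ((σ 2 * σ 4 * σ 6)⁻¹ *
      ((σ 1 * σ 4)⁻¹ * ((σ 1 * σ 2 * σ 3 * σ 4 * σ 5) * ((σ 2 * σ 5)⁻¹ *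
      ((σ 2 * σ 4 * σ 6) * ((σ 1 * σ 4)⁻¹ * (σ 1 * σ 4)⁻¹))))))) := by
    simp only [mul_inv_rev, mul_assoc, inv_mul_cancel_left, mul_inv_cancel_left]
    rw [sw (h24.symm.inv_left), inv_mul_cancel_left,
        sw (h46.inv_inv.symm), sw (h46.inv_inv.symm), sw (h36.inv_right.symm),
        sw (h46.symm.inv_left), sw (h46.symm.inv_left), inv_mul_cancel_left]
    simp only [mul_inv_cancel_left]
    rw [sw (h14.inv_right), mul_inv_cancel_left, sw (h14.symm.inv_right),
        mul_inv_cancel_left, sw (h13.symm.inv_right), (h13.symm.inv_right).eq,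
        mul_inv_cancel_left, mul_inv_cancel_left]
  rw [key]
  exact mul_mem ha (mul_mem ha (mul_mem (inv_mem he) (mul_mem (inv_mem ha)
    (mul_mem hf (mul_mem (inv_mem hb) (mul_mem he (mul_mem (inv_mem ha) (inv_mem ha))))))))
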